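/- Geometric lemma: Let x ∈ S_{d−1}, θ ∈ (0, π/2), and let A ⊆ C_θ(x) be measurable with s(A) > 0. If u is a uniformly random point of A, then E[s(C_θ(u) ∩ A)] ≤ 2 · s_d(q(θ)), where q(θ) = arcsin( sqrt((cos θ − 1)²(1 + 2 cos θ)) / sin θ ). -/

import Mathlib

/-! Put `c = cos θ`; then `cos q(θ) = √(2c² / (1 + c))`. For a unit vector `u` near `x` let
`m(u) = (x + u) / ‖x + u‖` be the midpoint of the arc from `x` to `u`. If `u, y ∈ A` are at angle
at most `θ` and `u` is the one farther from `x`, then `⟪m(u), y⟫ ≥ cos q(θ)`: so `y` lies in the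
`q(θ)`-cap around `m(u)`, or `u` lies in the one around `m(y)`. Hence
`s(C_θ(u) ∩ A) ≤ s(C_q(m(u)) ∩ A) + s{y ∈ A | u ∈ C_q(m(y))}`. Integrated over `u ∈ A`, the first
term contributes at most `s_d(q) s(A)`, and by Fubini so does the second. -/

open Real MeasureTheory

noncomputable def q_fn (θ : ℝ) : ℝ :=
  arcsin (Real.sqrt ((Real.cos θ - 1) ^ 2 * (1 + 2 * Real.cos θ)) / Real.sin θ)

open scoped ENNReal RealInnerProductSpace

lemma cos_mem_Ioo_of_mem_Ioo {θ : ℝ} (hθ : θ ∈ Set.Ioo 0 (π / 2)) : cos θ ∈ Set.Ioo 0 1 :=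
  ⟨cos_pos_of_mem_Ioo ⟨by linarith [hθ.1, pi_pos], hθ.2⟩,
    by simpa using cos_lt_cos_of_nonneg_of_le_pi le_rfl (by linarith [hθ.2, pi_pos]) hθ.1⟩

lemma cos_q_fn {θ : ℝ} (hθ : θ ∈ Set.Ioo 0 (π / 2)) :
    cos (q_fn θ) = √(2 * cos θ ^ 2 / (1 + cos θ)) := by
  obtain ⟨hc0, hc1⟩ := cos_mem_Ioo_of_mem_Ioo hθ
  rw [q_fn, cos_arcsin, div_pow, sq_sqrt (by positivity), sin_sq]
  congr 1
  field_simp [show 1 - cos θ ^ 2 ≠ 0 by nlinarith]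
  ring

lemma sqrt_two_mul_sq_div_one_add_lt_one {c : ℝ} (hc0 : 0 ≤ c) (hc1 : c < 1) :
    √(2 * c ^ 2 / (1 + c)) < 1 := by
  rw [sqrt_lt' one_pos, one_pow, div_lt_one (by linarith)]
  nlinarith

section Midpoint

variable {E : Type*} [NormedAddCommGroup E] [InnerProductSpace ℝ E]

noncomputable def sphereMidpoint (x u : E) : E := ‖x + u‖⁻¹ • (x + u)

lemma add_ne_zero_of_inner_pos {x u : E} (h : 0 < ⟪x, u⟫) : x + u ≠ 0 := by
  rintro hxu
  rw [eq_neg_of_add_eq_zero_right hxu, inner_neg_right, real_inner_self_eq_norm_sq] at h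
  nlinarith [sq_nonneg ‖x‖]

lemma norm_sphereMidpoint {x u : E} (h : x + u ≠ 0) : ‖sphereMidpoint x u‖ = 1 :=
  norm_smul_inv_norm h

lemma inner_sphereMidpoint {x u : E} (hx : ‖x‖ = 1) (hu : ‖u‖ = 1) (y : E) :
    ⟪sphereMidpoint x u, y⟫ = (⟪x, y⟫ + ⟪u, y⟫) / √(2 + 2 * ⟪x, u⟫) := by
  have hnorm : ‖x + u‖ = √(2 + 2 * ⟪x, u⟫) := by
    rw [← sqrt_sq (norm_nonneg _), norm_add_sq_real, hx, hu]; ring_nf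
  rw [sphereMidpoint, real_inner_smul_left, inner_add_left, hnorm, div_eq_inv_mul]

lemma sqrt_le_inner_sphereMidpoint {c : ℝ} (hc : 0 ≤ c) {x u y : E} (hx : ‖x‖ = 1)
    (hu : ‖u‖ = 1) (hxu : c ≤ ⟪x, u⟫) (huy : c ≤ ⟪u, y⟫) (hle : ⟪x, u⟫ ≤ ⟪x, y⟫) :
    √(2 * c ^ 2 / (1 + c)) ≤ ⟪sphereMidpoint x u, y⟫ := by
  rw [inner_sphereMidpoint hx hu, ← sqrt_sq (by linarith : 0 ≤ ⟪x, y⟫ + ⟪u, y⟫),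
    ← sqrt_div' _ (by linarith)]
  apply sqrt_le_sqrt
  rw [div_le_div_iff₀ (by linarith) (by linarith)]
  -- `(a + c)² (1 + c) - 4c² (1 + a)` vanishes at `a = c` and increases in `a`, where `a = ⟪x, u⟫`.
  nlinarith [mul_self_le_mul_self (by linarith : 0 ≤ ⟪x, u⟫ + c)
      (by linarith : ⟪x, u⟫ + c ≤ ⟪x, y⟫ + ⟪u, y⟫),
    mul_nonneg (sub_nonneg.2 hxu) (by linarith : 0 ≤ ⟪x, u⟫ + 3 * c),
    mul_nonneg hc (sq_nonneg (⟪x, u⟫ - c))]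

lemma sqrt_le_inner_sphereMidpoint_or {c : ℝ} (hc : 0 ≤ c) {x u y : E} (hx : ‖x‖ = 1)
    (hu : ‖u‖ = 1) (hy : ‖y‖ = 1) (hxu : c ≤ ⟪x, u⟫) (hxy : c ≤ ⟪x, y⟫)
    (huy : c ≤ ⟪u, y⟫) :
    √(2 * c ^ 2 / (1 + c)) ≤ ⟪sphereMidpoint x u, y⟫ ∨
      √(2 * c ^ 2 / (1 + c)) ≤ ⟪sphereMidpoint x y, u⟫ := by
  rcases le_total ⟪x, u⟫ ⟪x, y⟫ with h | h
  · exact .inl (sqrt_le_inner_sphereMidpoint hc hx hu hxu huy h)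
  · exact .inr (sqrt_le_inner_sphereMidpoint hc hx hy hxy (real_inner_comm u y ▸ huy) h)

end Midpoint

lemma lintegral_measure_le_two_mul_of_ae_or {α : Type*} [MeasurableSpace α] (ν : Measure α)
    [SFinite ν] {R P : α → α → Prop} (hP : MeasurableSet {p : α × α | P p.1 p.2}) {b : ℝ≥0∞}
    (hRP : ∀ᵐ u ∂ν, ∀ᵐ y ∂ν, R u y → P u y ∨ P y u) (hb : ∀ᵐ u ∂ν, ν {y | P u y} ≤ b) :
    ∫⁻ u, ν {y | R u y} ∂ν ≤ 2 * b * ν Set.univ := by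
  have hswap : ∫⁻ u, ν {y | P y u} ∂ν = ∫⁻ u, ν {y | P u y} ∂ν :=
    (Measure.prod_apply_symm hP).symm.trans (Measure.prod_apply hP)
  have hmeas : Measurable fun u => ν {y | P u y} := measurable_measure_prodMk_left hP
  calc ∫⁻ u, ν {y | R u y} ∂ν ≤ ∫⁻ u, (ν {y | P u y} + ν {y | P y u}) ∂ν :=
        lintegral_mono_ae <| hRP.mono fun u hu => (measure_mono_ae hu).trans (measure_union_le _ _)
    _ = 2 * ∫⁻ u, ν {y | P u y} ∂ν := by rw [lintegral_add_left hmeas, hswap, two_mul]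
    _ ≤ 2 * ∫⁻ _, b ∂ν := by gcongr 1; exact lintegral_mono_ae hb
    _ = 2 * b * ν Set.univ := by rw [lintegral_const, mul_assoc]

section Caps

variable {E : Type*} [NormedAddCommGroup E] [InnerProductSpace ℝ E] [MeasurableSpace E]

lemma exists_measure_cap_pos [ProperSpace E] {μ : Measure E} (hμ : μ (Metric.sphere 0 1) ≠ 0)
    {t : ℝ} (ht : t < 1) :
    ∃ z ∈ Metric.sphere (0 : E) 1, 0 < μ {y ∈ Metric.sphere 0 1 | t ≤ ⟪z, y⟫} := by
  by_contra! h
  refine hμ ((isCompact_sphere 0 1).measure_zero_of_nhdsWithin fun z hz =>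
    ⟨_, inter_mem_nhdsWithin _ ?_, nonpos_iff_eq_zero.1 (h z hz)⟩)
  have hz1 : ⟪z, z⟫ = 1 := by simp_all
  have hcont : Continuous fun y => ⟪z, y⟫ := continuous_const.inner continuous_id
  exact (continuousAt_const.eventually_lt hcont.continuousAt (hz1 ▸ ht)).mono fun _ => le_of_lt

variable [BorelSpace E] [SecondCountableTopology E]

lemma measurable_sphereMidpoint (x : E) : Measurable (sphereMidpoint x) :=
  (measurable_const.add measurable_id).norm.inv.smul (measurable_const.add measurable_id)

lemma measurable_measure_cap_inter {μ : Measure E} {A : Set E} (hA : MeasurableSet A)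
    (hμA : μ A ≠ ∞) (c : ℝ) :
    Measurable fun u : E => μ ({y ∈ Metric.sphere 0 1 | c ≤ ⟪u, y⟫} ∩ A) := by
  have : IsFiniteMeasure (μ.restrict A) := isFiniteMeasure_restrict.2 hμA
  simp_rw [← Measure.restrict_apply' hA]
  have hW : MeasurableSet {p : E × E | p.2 ∈ Metric.sphere 0 1 ∧ c ≤ ⟪p.1, p.2⟫} :=
    (Metric.isClosed_sphere.measurableSet.preimage measurable_snd).inter
      (measurableSet_le (f := fun _ => c) measurable_const (measurable_fst.inner measurable_snd))
  exact measurable_measure_prodMk_left hW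

lemma lintegral_measure_cap_inter_le {μ : Measure E} {A : Set E} (hA : MeasurableSet A)
    (hμA : μ A ≠ ∞) {x : E} (hx : ‖x‖ = 1) {c : ℝ} (hc : 0 < c)
    (hAsub : A ⊆ {y ∈ Metric.sphere 0 1 | c ≤ ⟪x, y⟫}) {b : ℝ≥0∞}
    (hcap : ∀ z ∈ Metric.sphere (0 : E) 1,
      μ {y ∈ Metric.sphere 0 1 | √(2 * c ^ 2 / (1 + c)) ≤ ⟪z, y⟫} ≤ b) :
    ∫⁻ u, μ ({y ∈ Metric.sphere 0 1 | c ≤ ⟪u, y⟫} ∩ A) ∂μ.restrict A ≤ 2 * b * μ A := by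
  have : IsFiniteMeasure (μ.restrict A) := isFiniteMeasure_restrict.2 hμA
  have hunit : ∀ v ∈ A, ‖v‖ = 1 := fun v hv => mem_sphere_zero_iff_norm.1 (hAsub hv).1
  have hmid : ∀ v ∈ A, sphereMidpoint x v ∈ Metric.sphere 0 1 := fun v hv =>
    mem_sphere_zero_iff_norm.2 <|
      norm_sphereMidpoint (add_ne_zero_of_inner_pos (hc.trans_le (hAsub hv).2))
  have hP : MeasurableSet {p : E × E | √(2 * c ^ 2 / (1 + c)) ≤ ⟪sphereMidpoint x p.1, p.2⟫} :=
    measurableSet_le measurable_const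
      (((measurable_sphereMidpoint x).comp measurable_fst).inner measurable_snd)
  have key := lintegral_measure_le_two_mul_of_ae_or (μ.restrict A)
    (R := fun u y => y ∈ Metric.sphere 0 1 ∧ c ≤ ⟪u, y⟫)
    (P := fun u y => √(2 * c ^ 2 / (1 + c)) ≤ ⟪sphereMidpoint x u, y⟫) (b := b) hP ?_ ?_
  · simpa only [Measure.restrict_apply' hA, Measure.restrict_apply_univ, Set.univ_inter] using key
  · filter_upwards [ae_restrict_mem hA] with u hu
    filter_upwards [ae_restrict_mem hA] with y hy ⟨_, huy⟩
    exact sqrt_le_inner_sphereMidpoint_or hc.le hx (hunit u hu) (hunit y hy) (hAsub hu).2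
      (hAsub hy).2 huy
  · filter_upwards [ae_restrict_mem hA] with u hu
    rw [Measure.restrict_apply' hA]
    refine (measure_mono ?_).trans (hcap _ (hmid u hu))
    exact fun y hy => ⟨(hAsub hy.2).1, hy.1⟩

end Caps

theorem expected_cap_intersection_le_general (d : ℕ) (θ sdq : ℝ)
    (hθ : θ ∈ Set.Ioo 0 (π / 2))
    (μ : Measure (EuclideanSpace ℝ (Fin d)))
    (S : Set (EuclideanSpace ℝ (Fin d))) (hS : S = Metric.sphere 0 1)
    (hprob : μ S = 1)
    (hcapq : ∀ z ∈ S, μ {y ∈ S | (inner ℝ z y : ℝ) ≥ Real.cos (q_fn θ)} = ENNReal.ofReal sdq)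
    (x : EuclideanSpace ℝ (Fin d)) (hx : x ∈ S)
    (A : Set (EuclideanSpace ℝ (Fin d))) (hA : MeasurableSet A)
    (hAsub : A ⊆ {y ∈ S | (inner ℝ x y : ℝ) ≥ Real.cos θ}) :
    (1 / (μ A).toReal) *
        ∫ u, (μ ({y ∈ S | (inner ℝ u y : ℝ) ≥ Real.cos θ} ∩ A)).toReal ∂(μ.restrict A) ≤
      2 * sdq := by
  subst hS
  obtain ⟨hc0, hc1⟩ := cos_mem_Ioo_of_mem_Ioo hθ
  simp only [ge_iff_le, cos_q_fn hθ] at hcapq hAsub ⊢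
  -- `ENNReal.ofReal` clips negative values, so `0 ≤ sdq` has to come from some cap of positive mass.
  have hsdq : 0 ≤ sdq := by
    obtain ⟨z, hz, hpos⟩ := exists_measure_cap_pos (μ := μ) (by simp [hprob])
      (sqrt_two_mul_sq_div_one_add_lt_one hc0.le hc1)
    exact (ENNReal.ofReal_pos.1 (hcapq z hz ▸ hpos)).le
  have hμA : μ A ≠ ∞ :=
    ne_top_of_le_ne_top (by simp [hprob]) (measure_mono fun y hy => (hAsub hy).1)
  have hbound := lintegral_measure_cap_inter_le hA hμA (mem_sphere_zero_iff_norm.1 hx) hc0 hAsub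
    fun z hz => (hcapq z hz).le
  rw [integral_toReal (measurable_measure_cap_inter hA hμA _).aemeasurable
    (ae_of_all _ fun u => (measure_mono Set.inter_subset_right).trans_lt hμA.lt_top),
    one_div_mul_eq_div]
  refine div_le_of_le_mul₀ ENNReal.toReal_nonneg (by positivity) ?_
  calc _ ≤ (2 * ENNReal.ofReal sdq * μ A).toReal := ENNReal.toReal_mono (by finiteness) hbound
    _ = 2 * sdq * (μ A).toReal := by simp [hsdq]

/-- Geometric lemma: if `A` is a measurable subset of positive measure of the
cap `C_θ(x)` on the unit sphere `S ⊆ ℝ^d` (with normalized surface measure `μ`),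
and `u` is a uniformly random point of `A`, then
`E[s(C_θ(u) ∩ A)] ≤ 2 · s_d(q(θ))`. -/
theorem expected_cap_intersection_le (d : ℕ) (hd : 3 ≤ d) (θ sdq : ℝ)
    (hθ : θ ∈ Set.Ioo 0 (π / 2))
    (μ : Measure (EuclideanSpace ℝ (Fin d)))
    (S : Set (EuclideanSpace ℝ (Fin d))) (hS : S = Metric.sphere 0 1)
    (hprob : μ S = 1)
    (hcapq : ∀ z ∈ S, μ {y ∈ S | (inner ℝ z y : ℝ) ≥ Real.cos (q_fn θ)} = ENNReal.ofReal sdq)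
    (x : EuclideanSpace ℝ (Fin d)) (hx : x ∈ S)
    (A : Set (EuclideanSpace ℝ (Fin d))) (hA : MeasurableSet A)
    (hAsub : A ⊆ {y ∈ S | (inner ℝ x y : ℝ) ≥ Real.cos θ})
    (hApos : 0 < μ A) :
    (1 / (μ A).toReal) *
        ∫ u, (μ ({y ∈ S | (inner ℝ u y : ℝ) ≥ Real.cos θ} ∩ A)).toReal ∂(μ.restrict A) ≤
      2 * sdq :=
  expected_cap_intersection_le_general d θ sdq hθ μ S hS hprob hcapq x hx A hA hAsub
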